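/- For any connected graph G and any good system of categories S (i.e., a family of connected vertex subsets such that for every pair of distinct vertices s, t there is a neighbor u of s with d(u,t) < d(s,t), where d(x,t) = |{C ∈ S : t ∈ C, x ∉ C}|), the membership dimension of S (the maximum over vertices v of the number of categories containing v) is at least diam(G). -/

import Mathlib

open Finset SimpleGraph

variable {V : Type*}

def catDist [DecidableEq V] (S : Finset (Finset V)) (s t : V) : ℕ :=
  (S.filter fun C => t ∈ C ∧ s ∉ C).card

def IsGoodSystem [DecidableEq V] (G : SimpleGraph V) (S : Finset (Finset V)) : Prop :=
  (∀ C ∈ S, (G.induce (C : Set V)).Connected) ∧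
    ∀ s t : V, s ≠ t → ∃ u, G.Adj s u ∧ catDist S u t < catDist S s t

def memdim [DecidableEq V] [Fintype V] (S : Finset (Finset V)) : ℕ :=
  univ.sup fun v : V => (S.filter fun C => v ∈ C).card

noncomputable def graphDiam [Fintype V] (G : SimpleGraph V) : ℕ :=
  univ.sup fun p : V × V => G.dist p.1 p.2

noncomputable def minMemdim (V : Type*) [DecidableEq V] [Fintype V] (G : SimpleGraph V) : ℕ :=
  sInf {m | ∃ S : Finset (Finset V), IsGoodSystem G S ∧ memdim S = m}

/-! Following greedy steps towards `t` decreases `catDist S · t` by at least one per edge, so it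
yields a walk from `s` to `t` of length at most `catDist S s t`; and `catDist S s t` only counts
categories containing `t`, of which there are at most `memdim S`. -/

theorem SimpleGraph.exists_walk_length_le_of_descent {G : SimpleGraph V} {f : V → ℕ} {t : V}
    (hf : ∀ s, s ≠ t → ∃ u, G.Adj s u ∧ f u < f s) (s : V) :
    ∃ p : G.Walk s t, p.length ≤ f s := by
  induction hs : f s using Nat.strong_induction_on generalizing s with
  | _ n ih =>
    by_cases hst : s = t
    · subst hst
      exact ⟨.nil, Nat.zero_le _⟩
    · obtain ⟨u, hsu, hu⟩ := hf s hst
      obtain ⟨p, hp⟩ := ih (f u) (hs ▸ hu) u rfl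
      exact ⟨.cons hsu p, by simp only [Walk.length_cons]; omega⟩

theorem SimpleGraph.dist_le_of_descent {G : SimpleGraph V} {f : V → ℕ} {t : V}
    (hf : ∀ s, s ≠ t → ∃ u, G.Adj s u ∧ f u < f s) (s : V) :
    G.dist s t ≤ f s :=
  let ⟨p, hp⟩ := exists_walk_length_le_of_descent hf s
  (dist_le p).trans hp

theorem catDist_le_memdim [Fintype V] [DecidableEq V] (S : Finset (Finset V)) (s t : V) :
    catDist S s t ≤ memdim S :=
  calc catDist S s t ≤ (S.filter fun C => t ∈ C).card :=
        card_le_card (monotone_filter_right S fun _ _ h => h.1)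
    _ ≤ memdim S := le_sup (f := fun v : V => (S.filter fun C => v ∈ C).card) (mem_univ t)

theorem IsGoodSystem.dist_le_catDist [DecidableEq V] {G : SimpleGraph V} {S : Finset (Finset V)}
    (hS : IsGoodSystem G S) (s t : V) : G.dist s t ≤ catDist S s t :=
  dist_le_of_descent (fun s hst => hS.2 s t hst) s

theorem stmt0 [Fintype V] [DecidableEq V] (G : SimpleGraph V)
    (S : Finset (Finset V)) (hS : IsGoodSystem G S) :
    graphDiam G ≤ memdim S :=
  Finset.sup_le fun p _ => (hS.dist_le_catDist p.1 p.2).trans (catDist_le_memdim S p.1 p.2)
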